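/- arXiv:1808.05593 — 5 statements merged into one kernel-verified Lean document; each statement's English description precedes it below -/
import Mathlib

section
/- Let μ and ν be Borel probability measures on ℝ. Then ν stochastically dominates μ (i.e., ν((−∞,y)) ≤ μ((−∞,y)) for every y ∈ ℝ) if and only if there exists a coupling π of μ and ν such that π({(a,b) ∈ ℝ × ℝ : a ≤ b}) = 1. -/
/-!
If `cdf ν ≤ cdf μ`, realise both measures on the same probability space by the quantile
transform: with `U` uniform on `(0, 1)`, `Q_μ(U) ~ μ` and `Q_ν(U) ~ ν`, where
`Q_μ(p) = inf {x | p ≤ F_μ(x)}`. Pointwise domination of the cdfs reverses to pointwise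
domination `Q_μ ≤ Q_ν` of the quantiles, so `(Q_μ(U), Q_ν(U))` is a coupling carried by
`{a ≤ b}`. Conversely, along such a coupling `b < y` forces `a < y`.
-/

open MeasureTheory Set Filter

lemma StieltjesFunction.le_of_forall_lt_imp_le (f : StieltjesFunction ℝ) {c x : ℝ}
    (h : ∀ y, x < y → c ≤ f y) : c ≤ f x := by
  rw [← f.iInf_Ioi_eq]
  exact le_ciInf fun y => h y y.2

namespace ProbabilityTheory

lemma cdf_le_cdf_of_measure_Iio_le {μ ν : Measure ℝ} [IsProbabilityMeasure μ]
    [IsProbabilityMeasure ν] (h : ∀ y, ν (Iio y) ≤ μ (Iio y)) (x : ℝ) : cdf ν x ≤ cdf μ x := by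
  refine (cdf μ).le_of_forall_lt_imp_le fun y hxy => ?_
  rw [← ENNReal.ofReal_le_ofReal_iff (cdf_nonneg μ y), ofReal_cdf, ofReal_cdf]
  calc ν (Iic x) ≤ ν (Iio y) := measure_mono (Iic_subset_Iio.2 hxy)
    _ ≤ μ (Iio y) := h y
    _ ≤ μ (Iic y) := measure_mono Iio_subset_Iic_self

/-- Meaningful only for `p ∈ (0, 1)`; elsewhere the `sInf` is of an empty or unbounded set. -/
noncomputable def quantile (μ : Measure ℝ) (p : ℝ) : ℝ :=
  sInf {x | p ≤ cdf μ x}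

section Quantile

variable (μ : Measure ℝ) {p : ℝ}

lemma bddBelow_setOf_le_cdf (hp : 0 < p) : BddBelow {x | p ≤ cdf μ x} := by
  obtain ⟨x₀, hx₀⟩ := ((tendsto_cdf_atBot μ).eventually (eventually_lt_nhds hp)).exists
  exact ⟨x₀, fun x hx => le_of_not_gt fun hxx₀ => (hx.trans (monotone_cdf μ hxx₀.le)).not_gt hx₀⟩

lemma nonempty_setOf_le_cdf (hp : p < 1) : {x | p ≤ cdf μ x}.Nonempty :=
  ((tendsto_cdf_atTop μ).eventually (eventually_gt_nhds hp)).exists.imp fun _ => le_of_lt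

/-- On `(0, 1)` the quantile function is the lower adjoint of the cdf. -/
lemma quantile_le_iff (hp : p ∈ Ioo 0 1) {x : ℝ} : quantile μ p ≤ x ↔ p ≤ cdf μ x := by
  refine ⟨fun h => (cdf μ).le_of_forall_lt_imp_le fun y hxy => ?_,
    fun h => csInf_le (bddBelow_setOf_le_cdf μ hp.1) h⟩
  obtain ⟨z, hpz, hzy⟩ := exists_lt_of_csInf_lt (nonempty_setOf_le_cdf μ hp.2) (h.trans_lt hxy)
  exact hpz.trans (monotone_cdf μ hzy.le)

lemma le_cdf_quantile (hp : p ∈ Ioo 0 1) : p ≤ cdf μ (quantile μ p) :=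
  (quantile_le_iff μ hp).1 le_rfl

lemma monotoneOn_quantile : MonotoneOn (quantile μ) (Ioo 0 1) := fun _ hp _ hq hpq =>
  (quantile_le_iff μ hp).2 (hpq.trans (le_cdf_quantile μ hq))

lemma aemeasurable_quantile : AEMeasurable (quantile μ) (volume.restrict (Ioo 0 1)) :=
  aemeasurable_restrict_of_monotoneOn measurableSet_Ioo (monotoneOn_quantile μ)

lemma map_quantile [IsProbabilityMeasure μ] :
    (volume.restrict (Ioo 0 1)).map (quantile μ) = μ := by
  refine Measure.ext_of_Iic _ _ fun x => ?_
  rw [Measure.map_apply_of_aemeasurable (aemeasurable_quantile μ) measurableSet_Iic,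
    Measure.restrict_apply' measurableSet_Ioo, ← ofReal_cdf]
  have hsub : Ioo 0 (cdf μ x) ⊆ quantile μ ⁻¹' Iic x ∩ Ioo 0 1 := fun p hp =>
    have hp' : p ∈ Ioo 0 1 := ⟨hp.1, hp.2.trans_le (cdf_le_one μ x)⟩
    ⟨(quantile_le_iff μ hp').2 hp.2.le, hp'⟩
  have hsup : quantile μ ⁻¹' Iic x ∩ Ioo 0 1 ⊆ Ioc 0 (cdf μ x) := fun p ⟨hpx, hp⟩ =>
    ⟨hp.1, (quantile_le_iff μ hp).1 hpx⟩
  refine le_antisymm ((measure_mono hsup).trans ?_) (le_trans ?_ (measure_mono hsub)) <;>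
    simp

lemma quantile_le_quantile_of_cdf_le {ν : Measure ℝ} (h : ∀ x, cdf ν x ≤ cdf μ x)
    (hp : p ∈ Ioo 0 1) : quantile μ p ≤ quantile ν p :=
  (quantile_le_iff μ hp).2 ((le_cdf_quantile ν hp).trans (h _))

end Quantile

/-- Meaningful only for `p ∈ (0, 1)`; elsewhere the `sInf` is of an empty or unbounded set. -/
noncomputable def quantileCoupling (μ ν : Measure ℝ) : Measure (ℝ × ℝ) :=
  (volume.restrict (Ioo 0 1)).map fun p => (quantile μ p, quantile ν p)

section QuantileCoupling

variable (μ ν : Measure ℝ)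

lemma aemeasurable_quantile_prod :
    AEMeasurable (fun p => (quantile μ p, quantile ν p)) (volume.restrict (Ioo 0 1)) :=
  (aemeasurable_quantile μ).prodMk (aemeasurable_quantile ν)

instance : IsProbabilityMeasure (volume.restrict (Ioo (0 : ℝ) 1)) :=
  ⟨by simp⟩

instance : IsProbabilityMeasure (quantileCoupling μ ν) :=
  Measure.isProbabilityMeasure_map (aemeasurable_quantile_prod μ ν)

lemma map_fst_quantileCoupling [IsProbabilityMeasure μ] :
    (quantileCoupling μ ν).map Prod.fst = μ := by
  rw [quantileCoupling, AEMeasurable.map_map_of_aemeasurable measurable_fst.aemeasurable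
    (aemeasurable_quantile_prod μ ν)]
  exact map_quantile μ

lemma map_snd_quantileCoupling [IsProbabilityMeasure ν] :
    (quantileCoupling μ ν).map Prod.snd = ν := by
  rw [quantileCoupling, AEMeasurable.map_map_of_aemeasurable measurable_snd.aemeasurable
    (aemeasurable_quantile_prod μ ν)]
  exact map_quantile ν

lemma ae_fst_le_snd_quantileCoupling (h : ∀ x, cdf ν x ≤ cdf μ x) :
    ∀ᵐ q ∂quantileCoupling μ ν, q.1 ≤ q.2 := by
  rw [quantileCoupling, ae_map_iff (aemeasurable_quantile_prod μ ν)
    (measurableSet_le measurable_fst measurable_snd)]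
  exact (ae_restrict_mem measurableSet_Ioo).mono fun _ => quantile_le_quantile_of_cdf_le μ h

end QuantileCoupling

end ProbabilityTheory

lemma measure_Iio_map_snd_le_map_fst {α : Type*} [MeasurableSpace α] [TopologicalSpace α]
    [LinearOrder α] [OrderClosedTopology α] [OpensMeasurableSpace α] {π : Measure (α × α)}
    (h : ∀ᵐ q ∂π, q.1 ≤ q.2) (y : α) : π.map Prod.snd (Iio y) ≤ π.map Prod.fst (Iio y) := by
  rw [Measure.map_apply measurable_snd measurableSet_Iio,
    Measure.map_apply measurable_fst measurableSet_Iio]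
  exact measure_mono_ae (h.mono fun q hq hqy => hq.trans_lt hqy)

open ProbabilityTheory in
/-- **Coupling and stochastic dominance.** For Borel probability measures `μ` and `ν` on `ℝ`,
`ν` stochastically dominates `μ` (i.e. `ν (Iio y) ≤ μ (Iio y)` for every `y`) if and only if
there is a coupling `π` of `μ` and `ν` (a probability measure on `ℝ × ℝ` with first marginal `μ`
and second marginal `ν`) concentrated on the set `{(a, b) | a ≤ b}`. -/
theorem stochastic_dominance_iff_coupling
    (μ ν : Measure ℝ) [IsProbabilityMeasure μ] [IsProbabilityMeasure ν] :
    (∀ y : ℝ, ν (Iio y) ≤ μ (Iio y)) ↔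
      ∃ π : Measure (ℝ × ℝ), IsProbabilityMeasure π ∧
        π.map Prod.fst = μ ∧ π.map Prod.snd = ν ∧
        π {p : ℝ × ℝ | p.1 ≤ p.2} = 1 := by
  have hmeas : MeasurableSet {p : ℝ × ℝ | p.1 ≤ p.2} :=
    measurableSet_le measurable_fst measurable_snd
  constructor
  · intro h
    exact ⟨quantileCoupling μ ν, inferInstance, map_fst_quantileCoupling μ ν,
      map_snd_quantileCoupling μ ν, (mem_ae_iff_prob_eq_one hmeas).1 <|
        ae_fst_le_snd_quantileCoupling μ ν (cdf_le_cdf_of_measure_Iio_le h)⟩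
  · rintro ⟨π, _, rfl, rfl, hπ_le⟩
    exact measure_Iio_map_snd_le_map_fst ((mem_ae_iff_prob_eq_one hmeas).2 hπ_le)
end

section
/- Fix n ≥ 2, a baseline hazard α > 0, an infectiousness effect γ ∈ ℝ, coefficients η, ξ : Fin n → ℝ, a bijection v : Fin n → Fin n (v l is the subject infected l-th), and u : Fin n → ℝ with 0 < u l < 1 for all l. For a constant treatment value c ∈ {0,1}, let R_l(c) = (Σ_{a ∈ S_l} exp(η a)) · (α + Σ_{b ∈ I_l} exp(γ·c + ξ b)), W_l(c) = −log(1 − u l)/R_l(c), and T_p(c) = Σ_{l=1}^{p} W_l(c). Then for every p: if γ < 0 then T_p(1) ≥ T_p(0) with strict inequality whenever p ≥ 2; if γ = 0 then T_p(1) = T_p(0); and if γ > 0 then T_p(1) ≤ T_p(0) with strict inequality whenever p ≥ 2. -/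
/-!
Under a constant treatment `c` every infectious contribution is scaled by `exp (γ * c)`, so each
coupled rate `R c l` is a monotone function of the shift `γ * c`, strictly so once someone is
infectious (`l ≥ 1`). The waiting times `W c l` are a fixed positive quantile divided by these
rates, hence move the opposite way, and so do their partial sums `T c p`; strictness needs a
summand with `l ≥ 1`, i.e. `p ≥ 2`.
-/

open Real Finset

section InfectionRate

variable {κ : Type*} (S I : Finset κ) (α : ℝ) (η ξ : κ → ℝ)

/-- The coupled infection rate, as a function of the infectiousness shift `t = γ * c`. -/
noncomputable def infectionRate (t : ℝ) : ℝ :=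
  (∑ a ∈ S, exp (η a)) * (α + ∑ b ∈ I, exp (t + ξ b))

variable {S I α}

theorem infectionRate_pos (hS : S.Nonempty) (hα : 0 < α) (t : ℝ) :
    0 < infectionRate S I α η ξ t :=
  mul_pos (sum_pos (fun _ _ => exp_pos _) hS)
    (add_pos_of_pos_of_nonneg hα (sum_nonneg fun _ _ => (exp_pos _).le))

theorem infectionRate_mono : Monotone (infectionRate S I α η ξ) := fun t t' h =>
  mul_le_mul_of_nonneg_left
    (add_le_add_right (sum_le_sum fun b _ => exp_le_exp.2 (by linarith)) α)
    (sum_nonneg fun a _ => (exp_pos _).le)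

theorem infectionRate_strictMono (hS : S.Nonempty) (hI : I.Nonempty) :
    StrictMono (infectionRate S I α η ξ) := fun t t' h =>
  mul_lt_mul_of_pos_left
    (add_lt_add_right (sum_lt_sum_of_nonempty hI fun b _ => exp_lt_exp.2 (by linarith)) α)
    (sum_pos (fun a _ => exp_pos _) hS)

end InfectionRate

section CoupledTime

variable {ι κ : Type*} {F : Finset ι} {S I : ι → Finset κ} {α : ℝ} {η ξ : κ → ℝ}
  {N : ι → ℝ}

theorem sum_div_infectionRate_antitone (hS : ∀ l ∈ F, (S l).Nonempty) (hα : 0 < α)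
    (hN : ∀ l ∈ F, 0 ≤ N l) :
    Antitone fun t => ∑ l ∈ F, N l / infectionRate (S l) (I l) α η ξ t := fun _ _ h =>
  sum_le_sum fun l hl => div_le_div_of_nonneg_left (hN l hl)
    (infectionRate_pos η ξ (hS l hl) hα _) (infectionRate_mono η ξ h)

theorem sum_div_infectionRate_strictAnti (hS : ∀ l ∈ F, (S l).Nonempty) (hα : 0 < α)
    (hN : ∀ l ∈ F, 0 < N l) (hI : ∃ l ∈ F, (I l).Nonempty) :
    StrictAnti fun t => ∑ l ∈ F, N l / infectionRate (S l) (I l) α η ξ t := by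
  intro t t' h
  obtain ⟨j, hjF, hIj⟩ := hI
  refine sum_lt_sum (fun l hl => ?_) ⟨j, hjF, ?_⟩
  · exact div_le_div_of_nonneg_left (hN l hl).le
      (infectionRate_pos η ξ (hS l hl) hα _) (infectionRate_mono η ξ h.le)
  · exact div_lt_div_of_pos_left (hN j hjF) (infectionRate_pos η ξ (hS j hjF) hα _)
      (infectionRate_strictMono η ξ (hS j hjF) hIj h)

end CoupledTime

section InfectionOrder

variable {n : ℕ} (v : Equiv.Perm (Fin n))

theorem apply_notMem_image_filter_lt (l : Fin n) :
    v l ∉ (univ.filter fun k => k < l).image v := by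
  simp

theorem image_filter_lt_nonempty {l : Fin n} (hl : 0 < (l : ℕ)) :
    ((univ.filter fun k => k < l).image v).Nonempty :=
  ⟨v ⟨0, by omega⟩, mem_image_of_mem v (mem_filter.2 ⟨mem_univ _, Fin.lt_def.2 hl⟩)⟩

end InfectionOrder

theorem coupled_infection_times_cluster_general
    (n : ℕ) (α γ : ℝ) (hα : 0 < α)
    (η ξ : Fin n → ℝ) (v : Equiv.Perm (Fin n))
    (u : Fin n → ℝ) (hu : ∀ l, 0 < u l ∧ u l < 1)
    (I S : Fin n → Finset (Fin n))
    (hI : ∀ l, I l = (Finset.univ.filter (fun k => k < l)).image v)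
    (hS : ∀ l, S l = (I l)ᶜ)
    (R : ℝ → Fin n → ℝ)
    (hR : ∀ c l, R c l =
      (∑ a ∈ S l, Real.exp (η a)) * (α + ∑ b ∈ I l, Real.exp (γ * c + ξ b)))
    (W : ℝ → Fin n → ℝ)
    (hW : ∀ c l, W c l = -Real.log (1 - u l) / R c l)
    (T : ℝ → ℕ → ℝ)
    (hT : ∀ c p, T c p = ∑ l ∈ Finset.univ.filter (fun l : Fin n => (l : ℕ) < p), W c l) :
    ∀ p : ℕ, 1 ≤ p → p ≤ n →
      (γ < 0 → T 0 p ≤ T 1 p ∧ (2 ≤ p → T 0 p < T 1 p)) ∧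
      (γ = 0 → T 1 p = T 0 p) ∧
      (0 < γ → T 1 p ≤ T 0 p ∧ (2 ≤ p → T 1 p < T 0 p)) := by
  intro p _ hpn
  set F := univ.filter fun l : Fin n => (l : ℕ) < p
  set time := fun t => ∑ l ∈ F, -log (1 - u l) / infectionRate (S l) (I l) α η ξ t
  have hT_eq : ∀ c, T c p = time (γ * c) := fun c => by
    simp only [time, hT, hW, hR, infectionRate, F]
  have hS_ne : ∀ l ∈ F, (S l).Nonempty := fun l _ =>
    ⟨v l, by rw [hS, mem_compl, hI]; exact apply_notMem_image_filter_lt v l⟩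
  have hN : ∀ l ∈ F, 0 < -log (1 - u l) := fun l _ =>
    neg_pos.2 (log_neg (by linarith [(hu l).2]) (by linarith [(hu l).1]))
  have hanti : Antitone time :=
    sum_div_infectionRate_antitone hS_ne hα fun l hl => (hN l hl).le
  have hstrict (hp : 2 ≤ p) : StrictAnti time :=
    sum_div_infectionRate_strictAnti hS_ne hα hN
      ⟨⟨1, by omega⟩, mem_filter.2 ⟨mem_univ _, hp⟩,
        by rw [hI]; exact image_filter_lt_nonempty v one_pos⟩
  simp only [hT_eq, mul_zero, mul_one]
  exact ⟨fun hγ => ⟨hanti hγ.le, fun hp => hstrict hp hγ⟩, fun hγ => by rw [hγ],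
    fun hγ => ⟨hanti hγ.le, fun hp => hstrict hp hγ⟩⟩

/-- **Coupled infection times under cluster randomization (β = 0).**
With subjects relabeled so that `v l` is the subject infected `(l+1)`-th, `I l` the set of
subjects infected before the `(l+1)`-th infection and `S l` its complement, rates
`R c l = (∑ a ∈ S l, exp (η a)) * (α + ∑ b ∈ I l, exp (γ*c + ξ b))` for the constant treatment
vector `c ∈ {0,1}`, quantile-coupled waiting times `W c l = -log (1 - u l) / R c l`, and coupled
infection time of the `p`-th infected subject `T c p = ∑_{l=1}^{p} W c l`: if `γ < 0` then
`T 1 p ≥ T 0 p`, strictly whenever `p ≥ 2`; if `γ = 0` then `T 1 p = T 0 p`; and if `γ > 0` then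
`T 1 p ≤ T 0 p`, strictly whenever `p ≥ 2`. -/
theorem coupled_infection_times_cluster
    (n : ℕ) (hn : 2 ≤ n) (α γ : ℝ) (hα : 0 < α)
    (η ξ : Fin n → ℝ) (v : Equiv.Perm (Fin n))
    (u : Fin n → ℝ) (hu : ∀ l, 0 < u l ∧ u l < 1)
    (I S : Fin n → Finset (Fin n))
    (hI : ∀ l, I l = (Finset.univ.filter (fun k => k < l)).image v)
    (hS : ∀ l, S l = (I l)ᶜ)
    (R : ℝ → Fin n → ℝ)
    (hR : ∀ c l, R c l =
      (∑ a ∈ S l, Real.exp (η a)) * (α + ∑ b ∈ I l, Real.exp (γ * c + ξ b)))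
    (W : ℝ → Fin n → ℝ)
    (hW : ∀ c l, W c l = -Real.log (1 - u l) / R c l)
    (T : ℝ → ℕ → ℝ)
    (hT : ∀ c p, T c p = ∑ l ∈ Finset.univ.filter (fun l : Fin n => (l : ℕ) < p), W c l) :
    ∀ p : ℕ, 1 ≤ p → p ≤ n →
      (γ < 0 → T 0 p ≤ T 1 p ∧ (2 ≤ p → T 0 p < T 1 p)) ∧
      (γ = 0 → T 1 p = T 0 p) ∧
      (0 < γ → T 1 p ≤ T 0 p ∧ (2 ≤ p → T 1 p < T 0 p)) :=
  coupled_infection_times_cluster_general n α γ hα η ξ v u hu I S hI hS R hR W hW T hT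
end

section
/- Fix n ≥ 2, a baseline hazard α > 0, an infectiousness effect γ < 0, coefficients η, ξ : Fin n → ℝ, a bijection v : Fin n → Fin n (v l is the subject infected l-th), and u : Fin n → ℝ with 0 < u l < 1 for all l. Let p ≠ q be two positions in {1,…,n}, and let x¹, x⁰ : Fin n → {0,1} be treatment vectors that agree on every subject except that x¹(v p) = 1, x¹(v q) = 0, x⁰(v p) = 0, x⁰(v q) = 1. With T_p(x) = Σ_{l=1}^{p} W_l(x) the coupled infection time of the p-th infected subject: if p < q then T_p(x¹) = T_p(x⁰), and if q < p then T_p(x¹) < T_p(x⁰). -/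
/-!
Up to the `p`-th infection only the subjects infected before position `p` contribute to the
rates, and the `p`-th infected subject is not among them. If `p < q` neither swapped subject has
been infected yet, so every rate, hence `T_p`, is the same under both allocations. If `q < p`,
the `q`-th infected subject is infectious from step `q` on; it is untreated under `x¹` and
treated under `x⁰`, and since `γ < 0` treatment lowers infectiousness. So every rate up to step
`p` is at least as large under `x¹`, strictly so at step `q`, and the waiting times, being
inversely proportional to the rates, make `T_p(x¹) < T_p(x⁰)`.
-/

open Real Finset

theorem Function.Injective.apply_mem_image_filter_lt_iff {α β : Type*} [Fintype α] [LinearOrder α]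
    [DecidableEq β] {f : α → β} (hf : Function.Injective f) {j l : α} :
    f j ∈ (univ.filter (fun k => k < l)).image f ↔ j < l := by
  rw [hf.mem_finset_image, mem_filter, and_iff_right (mem_univ j)]

namespace CoupledInfection

variable {n : ℕ} {α γ : ℝ} {η ξ : Fin n → ℝ} {v : Equiv.Perm (Fin n)} {u : Fin n → ℝ}
  {I S : Fin n → Finset (Fin n)} {R W : (Fin n → ℝ) → Fin n → ℝ} {x x' : Fin n → ℝ} {l : Fin n}

section

variable (hI : ∀ l, I l = (univ.filter (fun k => k < l)).image v)
include hI

theorem apply_mem_infected_iff {j : Fin n} : v j ∈ I l ↔ j < l := by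
  rw [hI]; exact v.injective.apply_mem_image_filter_lt_iff

theorem apply_notMem_infected_of_le {j : Fin n} (hlj : l ≤ j) : v j ∉ I l := by
  rw [apply_mem_infected_iff hI, not_lt]; exact hlj

variable (hS : ∀ l, S l = (I l)ᶜ)
include hS

theorem susceptible_weight_pos : 0 < ∑ a ∈ S l, exp (η a) :=
  sum_pos (fun a _ => exp_pos _)
    ⟨v l, by rw [hS, mem_compl]; exact apply_notMem_infected_of_le hI le_rfl⟩

end

section

variable (hR : ∀ x l, R x l =
  (∑ a ∈ S l, exp (η a)) * (α + ∑ b ∈ I l, exp (γ * x b + ξ b)))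
include hR

theorem rate_congr (h : ∀ b ∈ I l, x b = x' b) : R x l = R x' l := by
  rw [hR, hR]
  congr 2
  exact sum_congr rfl fun b hb => by rw [h b hb]

theorem rate_le_of_le (hγ : γ ≤ 0) (hle : ∀ b ∈ I l, x b ≤ x' b) : R x' l ≤ R x l := by
  have hsum : ∑ b ∈ I l, exp (γ * x' b + ξ b) ≤ ∑ b ∈ I l, exp (γ * x b + ξ b) :=
    sum_le_sum fun b hb => exp_le_exp.mpr (by linarith [mul_le_mul_of_nonpos_left (hle b hb) hγ])
  rw [hR, hR]
  exact mul_le_mul_of_nonneg_left (by linarith) (sum_nonneg fun a _ => (exp_pos _).le)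

variable (hI : ∀ l, I l = (univ.filter (fun k => k < l)).image v) (hS : ∀ l, S l = (I l)ᶜ)
include hI hS

theorem rate_pos (hα : 0 < α) : 0 < R x l := by
  rw [hR]
  exact mul_pos (susceptible_weight_pos hI hS)
    (add_pos_of_pos_of_nonneg hα (sum_nonneg fun b _ => (exp_pos _).le))

theorem rate_lt_of_le_of_exists_lt (hγ : γ < 0) (hle : ∀ b ∈ I l, x b ≤ x' b)
    (hlt : ∃ b ∈ I l, x b < x' b) : R x' l < R x l := by
  have hsum : ∑ b ∈ I l, exp (γ * x' b + ξ b) < ∑ b ∈ I l, exp (γ * x b + ξ b) :=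
    sum_lt_sum
      (fun b hb => exp_le_exp.mpr (by linarith [mul_le_mul_of_nonpos_left (hle b hb) hγ.le]))
      (hlt.imp fun b ⟨hb, hxb⟩ =>
        ⟨hb, exp_lt_exp.mpr (by linarith [mul_lt_mul_of_neg_left hxb hγ])⟩)
  rw [hR, hR]
  exact mul_lt_mul_of_pos_left (by linarith) (susceptible_weight_pos hI hS)

variable (hW : ∀ x l, W x l = -log (1 - u l) / R x l)
include hW

theorem wait_le_of_le (hα : 0 < α) (hγ : γ ≤ 0) (hu0 : 0 ≤ u l) (hu1 : u l ≤ 1)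
    (hle : ∀ b ∈ I l, x b ≤ x' b) : W x l ≤ W x' l := by
  rw [hW, hW]
  exact div_le_div_of_nonneg_left (neg_nonneg.mpr (log_nonpos (by linarith) (by linarith)))
    (rate_pos hR hI hS hα) (rate_le_of_le hR hγ hle)

theorem wait_lt_of_le_of_exists_lt (hα : 0 < α) (hγ : γ < 0) (hu : 0 < u l ∧ u l < 1)
    (hle : ∀ b ∈ I l, x b ≤ x' b) (hlt : ∃ b ∈ I l, x b < x' b) : W x l < W x' l := by
  rw [hW, hW]
  exact div_lt_div_of_pos_left (neg_pos.mpr (log_neg (by linarith) (by linarith)))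
    (rate_pos hR hI hS hα) (rate_lt_of_le_of_exists_lt hR hI hS hγ hle hlt)

end

end CoupledInfection

open CoupledInfection in
/-- **Coupled infection times under block randomization (β = 0, γ < 0).**
Subjects are relabeled so that `v l` is the subject infected `(l+1)`-th; `I l` is the set of
subjects infected before the `(l+1)`-th infection and `S l` its complement. For a treatment
vector `x` with values in `{0,1}`, the coupled process has rates
`R x l = (∑ a ∈ S l, exp (η a)) * (α + ∑ b ∈ I l, exp (γ * x b + ξ b))`, waiting times
`W x l = -log (1 - u l) / R x l`, and coupled infection time of the `p`-th infected subject
`T x p = ∑_{l=1}^{p} W x l`. If `x¹` and `x⁰` agree everywhere except that they swap the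
treatments of the `p`-th and `q`-th infected subjects (`x¹` treats the `p`-th, `x⁰` the `q`-th),
then `T x¹ p = T x⁰ p` when `p < q`, and `T x¹ p < T x⁰ p` when `q < p`. -/
theorem coupled_infection_times_block
    (n : ℕ) (α γ : ℝ) (hα : 0 < α) (hγ : γ < 0)
    (η ξ : Fin n → ℝ) (v : Equiv.Perm (Fin n))
    (u : Fin n → ℝ) (hu : ∀ l, 0 < u l ∧ u l < 1)
    (I S : Fin n → Finset (Fin n))
    (hI : ∀ l, I l = (Finset.univ.filter (fun k => k < l)).image v)
    (hS : ∀ l, S l = (I l)ᶜ)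
    (R : (Fin n → ℝ) → Fin n → ℝ)
    (hR : ∀ x l, R x l =
      (∑ a ∈ S l, Real.exp (η a)) * (α + ∑ b ∈ I l, Real.exp (γ * x b + ξ b)))
    (W : (Fin n → ℝ) → Fin n → ℝ)
    (hW : ∀ x l, W x l = -Real.log (1 - u l) / R x l)
    (T : (Fin n → ℝ) → ℕ → ℝ)
    (hT : ∀ x p, T x p = ∑ l ∈ Finset.univ.filter (fun l : Fin n => (l : ℕ) < p), W x l)
    (p q : ℕ) (hp1 : 1 ≤ p) (hpn : p ≤ n) (hq1 : 1 ≤ q) (hqn : q ≤ n)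
    (x1 x0 : Fin n → ℝ)
    (hx1q : x1 (v ⟨q - 1, by omega⟩) = 0)
    (hx0q : x0 (v ⟨q - 1, by omega⟩) = 1)
    (hagree : ∀ j : Fin n,
      j ≠ v ⟨p - 1, by omega⟩ → j ≠ v ⟨q - 1, by omega⟩ → x1 j = x0 j) :
    (p < q → T x1 p = T x0 p) ∧ (q < p → T x1 p < T x0 p) := by
  have hne : ∀ (k : ℕ) (hk : k < n) (l : Fin n), (l : ℕ) ≤ k → ∀ b ∈ I l, b ≠ v ⟨k, hk⟩ :=
    fun k hk l hlk b hb hbk => apply_notMem_infected_of_le hI (Fin.le_def.mpr hlk) (hbk ▸ hb)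
  rw [hT, hT]
  refine ⟨fun hpq => sum_congr rfl fun l hl => ?_, fun hqp => ?_⟩
  · have hlp : (l : ℕ) < p := (mem_filter.mp hl).2
    rw [hW, hW, rate_congr hR fun b hb =>
      hagree b (hne _ _ l (by omega) b hb) (hne _ _ l (by omega) b hb)]
  · have hle : ∀ l : Fin n, (l : ℕ) < p → ∀ b ∈ I l, x1 b ≤ x0 b := fun l hlp b hb => by
      by_cases hbq : b = v ⟨q - 1, by omega⟩
      · rw [hbq, hx1q, hx0q]; exact zero_le_one
      · exact (hagree b (hne _ _ l (by omega) b hb) hbq).le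
    have hq_infected : v ⟨q - 1, by omega⟩ ∈ I ⟨q, by omega⟩ :=
      (apply_mem_infected_iff hI).mpr (Fin.lt_def.mpr (Nat.sub_one_lt_of_le hq1 le_rfl))
    refine sum_lt_sum (fun l hl => ?_) ⟨⟨q, by omega⟩, mem_filter.mpr ⟨mem_univ _, hqp⟩, ?_⟩
    · exact wait_le_of_le hR hI hS hW hα hγ.le (hu l).1.le (hu l).2.le
        (hle l (mem_filter.mp hl).2)
    · exact wait_lt_of_le_of_exists_lt hR hI hS hW hα hγ (hu _) (hle _ hqp)
        ⟨_, hq_infected, by rw [hx1q, hx0q]; exact zero_lt_one⟩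
end

section
/- Fix n ≥ 1, a baseline hazard α > 0, an infectiousness effect γ ∈ ℝ, coefficients η, ξ : Fin n → ℝ, a bijection v : Fin n → Fin n (v l is the subject infected l-th), and u : Fin n → ℝ with 0 < u l < 1 for all l. Let p be a position in {1,…,n}, and let x¹, x⁰ : Fin n → {0,1} be treatment vectors that agree on every subject except possibly on v p. Then the coupled infection times of the p-th infected subject are equal: T_p(x¹) = T_p(x⁰). -/
open Real Finset

/-! `T_p(x)` only involves the rates `R_l(x)` with `l < p`, and `R_l(x)` reads `x` only on the
subjects infected before position `l`; since `v` is injective, the `p`-th infected subject is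
not among them, so both treatment vectors give the same rates. -/

theorem eqOn_image_filter_lt_of_forall_ne {ι σ β : Type*} [Fintype ι] [LinearOrder ι]
    [DecidableEq σ] {v : ι → σ} (hv : Function.Injective v) {x₁ x₀ : σ → β} {l q : ι}
    (hlq : l ≤ q) (h : ∀ j, j ≠ v q → x₁ j = x₀ j) :
    Set.EqOn x₁ x₀ ((univ.filter (· < l)).image v) := by
  intro b hb
  obtain ⟨k, hk, rfl⟩ := mem_image.mp hb
  have hkq : k < q := (mem_filter.mp hk).2.trans_le hlq
  exact h _ (hv.ne hkq.ne)

/-- **Coupled infection times under Bernoulli randomization (β = 0).**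
Subjects are relabeled so that `v l` is the subject infected `(l+1)`-th; `I l` is the set of
subjects infected before the `(l+1)`-th infection and `S l` its complement. For a treatment
vector `x` with values in `{0,1}`, the coupled process has rates
`R x l = (∑ a ∈ S l, exp (η a)) * (α + ∑ b ∈ I l, exp (γ * x b + ξ b))`, waiting times
`W x l = -log (1 - u l) / R x l`, and coupled infection time of the `p`-th infected subject
`T x p = ∑_{l=1}^{p} W x l`. If `x¹` and `x⁰` agree on every subject except possibly on the
subject infected `p`-th, then `T x¹ p = T x⁰ p`: a subject's own treatment does not enter any
rate before that subject is infected. -/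
theorem coupled_infection_times_bernoulli
    (n : ℕ) (α γ : ℝ)
    (η ξ : Fin n → ℝ) (v : Equiv.Perm (Fin n))
    (u : Fin n → ℝ)
    (I S : Fin n → Finset (Fin n))
    (hI : ∀ l, I l = (Finset.univ.filter (fun k => k < l)).image v)
    (R : (Fin n → ℝ) → Fin n → ℝ)
    (hR : ∀ x l, R x l =
      (∑ a ∈ S l, Real.exp (η a)) * (α + ∑ b ∈ I l, Real.exp (γ * x b + ξ b)))
    (W : (Fin n → ℝ) → Fin n → ℝ)
    (hW : ∀ x l, W x l = -Real.log (1 - u l) / R x l)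
    (T : (Fin n → ℝ) → ℕ → ℝ)
    (hT : ∀ x p, T x p = ∑ l ∈ Finset.univ.filter (fun l : Fin n => (l : ℕ) < p), W x l)
    (p : ℕ) (hp1 : 1 ≤ p) (hpn : p ≤ n)
    (x1 x0 : Fin n → ℝ)
    (hagree : ∀ j : Fin n, j ≠ v ⟨p - 1, by omega⟩ → x1 j = x0 j) :
    T x1 p = T x0 p := by
  rw [hT, hT]
  refine sum_congr rfl fun l hl => ?_
  have hlp : l ≤ ⟨p - 1, by omega⟩ := by
    rw [mem_filter] at hl
    exact Fin.le_def.mpr (Nat.le_sub_one_of_lt hl.2)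
  have hI_agree : Set.EqOn x1 x0 (I l) :=
    hI l ▸ eqOn_image_filter_lt_of_forall_ne v.injective hlp hagree
  have hsum : ∑ b ∈ I l, exp (γ * x1 b + ξ b) = ∑ b ∈ I l, exp (γ * x0 b + ξ b) :=
    sum_congr rfl fun b hb => by rw [hI_agree hb]
  rw [hW, hW, hR, hR, hsum]
end

section
/- Let k ∈ ℕ and let r, s : Fin k → ℝ satisfy 0 < s l ≤ r l for all l. Let μ_r be the product over l of the exponential distributions with rates r l on the space of functions Fin k → ℝ, and similarly μ_s. Then for every t ∈ ℝ, μ_s({f : Σ_l f l < t}) ≤ μ_r({f : Σ_l f l < t}); that is, the sum of independent exponentials with the smaller rates stochastically dominates the sum with the larger rates. -/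
/-!
Multiplying an `Exp(s)` variable by `s / r` gives an `Exp(r)` variable. Scaling coordinatewise by
`s l / r l ≤ 1` therefore couples the two product measures so that the `r`-sample lies below the
`s`-sample, and `{f | ∑ l, f l < t}` is a lower set.
-/

open MeasureTheory ProbabilityTheory

lemma MeasureTheory.measure_le_map_apply_of_ae_le {α : Type*} [MeasurableSpace α] [Preorder α]
    {μ : Measure α} {g : α → α} (hg : Measurable g) (hle : ∀ᵐ x ∂μ, g x ≤ x) {S : Set α}
    (hS : MeasurableSet S) (hSl : IsLowerSet S) : μ S ≤ μ.map g S := by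
  rw [Measure.map_apply hg hS]
  exact measure_mono_ae (hle.mono fun x hx hxS => hSl hx hxS)

namespace ProbabilityTheory

lemma ae_nonneg_expMeasure (r : ℝ) : ∀ᵐ x ∂expMeasure r, 0 ≤ x := by
  simp only [ae_iff, not_le]
  change volume.withDensity (exponentialPDF r) (Set.Iio 0) = 0
  rw [withDensity_apply _ measurableSet_Iio]
  exact lintegral_exponentialPDF_of_nonpos le_rfl

lemma map_const_mul_expMeasure {r c : ℝ} (hr : 0 < r) (hc : 0 < c) :
    (expMeasure r).map (c * ·) = expMeasure (r / c) := by
  have := isProbabilityMeasure_expMeasure hr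
  have := isProbabilityMeasure_expMeasure (div_pos hr hc)
  have : IsProbabilityMeasure ((expMeasure r).map (c * ·)) :=
    Measure.isProbabilityMeasure_map (measurable_const_mul c).aemeasurable
  refine Measure.ext_of_Iic _ _ fun x => ?_
  have hpre : (c * ·) ⁻¹' Set.Iic x = Set.Iic (x / c) := by
    ext y; simp [le_div_iff₀ hc, mul_comm]
  rw [Measure.map_apply (measurable_const_mul c) measurableSet_Iic, hpre, ← ofReal_cdf,
    ← ofReal_cdf, cdf_expMeasure_eq hr, cdf_expMeasure_eq (div_pos hr hc)]
  simp only [le_div_iff₀ hc, zero_mul, mul_div, div_mul_eq_mul_div]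

end ProbabilityTheory

/-- **Stochastic dominance of sums of independent exponentials with smaller rates.**
If `0 < s l ≤ r l` for all `l`, let `μ_r` (resp. `μ_s`) be the product over `l : Fin k` of the
exponential distributions with rates `r l` (resp. `s l`) on `Fin k → ℝ`. Then for every `t`,
`μ_s {f | ∑ l, f l < t} ≤ μ_r {f | ∑ l, f l < t}`: the sum of independent exponentials with the
smaller rates stochastically dominates the one with larger rates. -/
theorem exponential_sum_stochastic_dominance
    (k : ℕ) (r s : Fin k → ℝ) (hs : ∀ l, 0 < s l) (hsr : ∀ l, s l ≤ r l) :
    ∀ t : ℝ,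
      (Measure.pi fun l => expMeasure (s l)) {f : Fin k → ℝ | ∑ l, f l < t} ≤
        (Measure.pi fun l => expMeasure (r l)) {f : Fin k → ℝ | ∑ l, f l < t} := by
  intro t
  have hr l : 0 < r l := (hs l).trans_le (hsr l)
  have hc l : 0 < s l / r l := div_pos (hs l) (hr l)
  have _ : ∀ l, IsProbabilityMeasure (expMeasure (s l)) :=
    fun l => isProbabilityMeasure_expMeasure (hs l)
  have hmap : (Measure.pi fun l => expMeasure (s l)).map (fun f l => s l / r l * f l) =
      Measure.pi fun l => expMeasure (r l) := by
    rw [Measure.pi_map_pi fun l => (measurable_const_mul _).aemeasurable]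
    congr! 2 with l
    rw [map_const_mul_expMeasure (hs l) (hc l), div_div_cancel₀ (hs l).ne']
  rw [← hmap]
  refine measure_le_map_apply_of_ae_le
    (measurable_pi_lambda _ fun l => (measurable_pi_apply l).const_mul _) ?_ ?_ ?_
  · filter_upwards [ae_all_iff.2 fun l =>
      Measure.tendsto_eval_ae_ae.eventually (ae_nonneg_expMeasure (s l))] with f hf l
    exact mul_le_of_le_one_left (hf l) (div_le_one_of_le₀ (hsr l) (hr l).le)
  · exact measurableSet_lt (Finset.measurable_sum _ fun l _ => measurable_pi_apply l)
      measurable_const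
  · exact fun f g hfg hg => (Finset.sum_le_sum fun l _ => hfg l).trans_lt hg
end
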